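/- arXiv:2207.02421 — 3 statements merged into one kernel-verified Lean document; each statement's English description precedes it below -/
import Mathlib

section
/- Let F : ℝ → Matrix (Fin 3) (Fin 3) ℝ be differentiable at t with derivative Ḟ, suppose F(t) is invertible, and let a₀ ∈ ℝ³ be a vector with F(t)·a₀ ≠ 0. Define the fibre stretch λ(s) = ‖F(s)·a₀‖ (Euclidean norm), the velocity gradient l = Ḟ F(t)⁻¹, and the rate of strain tensor d = (l + lᵀ)/2. Then λ is differentiable at t and its derivative (the fibre strain rate) equals ε = ((F(t)a₀) · (d ·ᵥ (F(t)a₀))) / λ(t), i.e. λ'(t) = (F a₀)ᵀ d (F a₀) / λ. -/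
/-!
Write `x s = F s a₀`. Then `λ = √(x ⬝ᵥ x)` has derivative `x ⬝ᵥ ẋ / λ`, and
`ẋ = Ḟ a₀ = (Ḟ F⁻¹) (F a₀) = l x`. The quadratic form `x ⬝ᵥ l x` only sees the symmetric
part `d` of `l`, since `x ⬝ᵥ lᵀ x = x ⬝ᵥ l x`.
-/

open Matrix

section Calculus

variable {𝕜 : Type*} [NontriviallyNormedField 𝕜] {ι : Type*} {t : 𝕜}

theorem HasDerivAt.dotProduct [Fintype ι] {x y : 𝕜 → ι → 𝕜} {x' y' : ι → 𝕜}
    (hx : HasDerivAt x x' t) (hy : HasDerivAt y y' t) :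
    HasDerivAt (fun s => x s ⬝ᵥ y s) (x' ⬝ᵥ y t + x t ⬝ᵥ y') t := by
  have hmul : ∀ i, HasDerivAt (fun s => x s i * y s i) (x' i * y t i + x t i * y' i) t :=
    fun i => (hasDerivAt_pi.mp hx i).mul (hasDerivAt_pi.mp hy i)
  simpa only [_root_.dotProduct, Finset.sum_add_distrib] using
    HasDerivAt.fun_sum fun i _ => hmul i

theorem hasDerivAt_mulVec_of_entries {m : Type*} [Fintype m] {F : 𝕜 → Matrix ι m 𝕜}
    {F' : Matrix ι m 𝕜} (hF : ∀ i j, HasDerivAt (fun s => F s i j) (F' i j) t) (v : m → 𝕜) :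
    HasDerivAt (fun s => F s *ᵥ v) (F' *ᵥ v) t :=
  hasDerivAt_pi.mpr fun i => HasDerivAt.fun_sum fun j _ => (hF i j).mul_const (v j)

end Calculus

theorem HasDerivAt.sqrt_dotProduct_self {ι : Type*} [Fintype ι] {x : ℝ → ι → ℝ} {x' : ι → ℝ}
    {t : ℝ} (hx : HasDerivAt x x' t) (hx₀ : x t ≠ 0) :
    HasDerivAt (fun s => √(x s ⬝ᵥ x s)) ((x t ⬝ᵥ x') / √(x t ⬝ᵥ x t)) t := by
  have hsq : HasDerivAt (fun s => x s ⬝ᵥ x s) (2 * (x t ⬝ᵥ x')) t := by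
    refine (hx.dotProduct hx).congr_deriv ?_
    rw [dotProduct_comm x']
    ring
  convert hsq.sqrt (fun h => hx₀ (dotProduct_self_eq_zero.mp h)) using 1
  ring

namespace Matrix

theorem dotProduct_symmPart_mulVec {R ι : Type*} [Field R] [NeZero (2 : R)] [Fintype ι]
    (A : Matrix ι ι R) (x : ι → R) :
    x ⬝ᵥ (((1 : R) / 2) • (A + Aᵀ)) *ᵥ x = x ⬝ᵥ A *ᵥ x := by
  have htranspose : x ⬝ᵥ Aᵀ *ᵥ x = x ⬝ᵥ A *ᵥ x := by
    rw [dotProduct_mulVec, vecMul_transpose, dotProduct_comm]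
  rw [smul_mulVec, dotProduct_smul, add_mulVec, dotProduct_add, htranspose, smul_eq_mul]
  field_simp
  ring

theorem mul_inv_mulVec_mulVec {R ι : Type*} [CommRing R] [Fintype ι] [DecidableEq ι]
    (L F : Matrix ι ι R) (hF : IsUnit F.det) (v : ι → R) :
    (L * F⁻¹) *ᵥ (F *ᵥ v) = L *ᵥ v := by
  rw [mulVec_mulVec, Matrix.mul_assoc, nonsing_inv_mul _ hF, Matrix.mul_one]

end Matrix

/-- Fibre strain rate: with `l = Fdot (F t)⁻¹`, `d = (l + lᵀ)/2`, and the fibre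
stretch `λ s = ‖F s a₀‖` (Euclidean norm, i.e. `√((F s a₀) ⬝ᵥ (F s a₀))`), the
stretch is differentiable at `t` with derivative
`ε = (F a₀)ᵀ d (F a₀) / λ`. -/
theorem fibre_strain_rate
    (F : ℝ → Matrix (Fin 3) (Fin 3) ℝ) (Fdot : Matrix (Fin 3) (Fin 3) ℝ) (t : ℝ)
    (a₀ : Fin 3 → ℝ)
    (hF : ∀ i j, HasDerivAt (fun s => F s i j) (Fdot i j) t)
    (hinv : IsUnit (F t).det)
    (ha : F t *ᵥ a₀ ≠ 0) :
    HasDerivAt (fun s => Real.sqrt ((F s *ᵥ a₀) ⬝ᵥ (F s *ᵥ a₀)))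
      (((F t *ᵥ a₀) ⬝ᵥ
          ((((1 : ℝ) / 2) • (Fdot * (F t)⁻¹ + (Fdot * (F t)⁻¹)ᵀ)) *ᵥ (F t *ᵥ a₀))) /
        Real.sqrt ((F t *ᵥ a₀) ⬝ᵥ (F t *ᵥ a₀))) t := by
  rw [dotProduct_symmPart_mulVec, mul_inv_mulVec_mulVec _ _ hinv]
  exact (hasDerivAt_mulVec_of_entries hF a₀).sqrt_dotProduct_self ha
end

section
/- Let F : ℝ → Matrix (Fin 3) (Fin 3) ℝ be differentiable at t with derivative Ḟ, suppose F(t) is invertible with det F(t) > 0, and let a₀ ∈ ℝ³ with F(t)·a₀ ≠ 0. Define the modified stretch λ̄(s) = (det F(s))^{-1/3} · ‖F(s)·a₀‖, the modified deformation gradient F̄ = (det F(t))^{-1/3} F(t), the velocity gradient l = Ḟ F(t)⁻¹, and the rate of strain tensor d = (l + lᵀ)/2. Then λ̄ is differentiable at t and its derivative (the modified strain rate) is ε̄ = λ̄'(t) = ((F̄a₀)ᵀ (d − (1/3)(tr d)·I) (F̄a₀)) / λ̄(t), where I is the 3×3 identity matrix; that is, ε̄ is obtained by contracting the deviatoric projection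 of d between modified fibre directions. -/
/-! Jacobi's formula gives `(det F)˙ = det F · tr l`, and since `Ḟ a₀ = l (F a₀)` the fibre length
satisfies `‖F a₀‖˙ = (F a₀ · l F a₀) / ‖F a₀‖`. By the product rule,
`λ̄˙ = (det F)^(-1/3) (F a₀ · l F a₀ - (1/3) tr l ‖F a₀‖²) / ‖F a₀‖`. This is the claimed
contraction: the quadratic form of `l` is that of its symmetric part `d`, `tr d = tr l`, and one
factor `(det F)^(-1/3)` of `F̄ a₀ · (𝕡 : d) F̄ a₀` cancels against the denominator `λ̄`. -/

open Matrix

variable {𝕜 : Type*} [NontriviallyNormedField 𝕜] {n : Type*} [Fintype n]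

theorem Matrix.trace_adjugate_mul_eq_sum_det_updateCol [DecidableEq n] (A B : Matrix n n 𝕜) :
    (A.adjugate * B).trace = ∑ i, (A.updateCol i (fun k => B k i)).det := by
  simp only [trace, diag, ← cramer_apply, cramer_eq_adjugate_mulVec, mul_apply, mulVec, dotProduct]

/- Differentiating the Leibniz formula by the product rule replaces one column at a time. -/
theorem Matrix.hasDerivAt_det [DecidableEq n] {F : 𝕜 → Matrix n n 𝕜} {F' : Matrix n n 𝕜}
    {t : 𝕜} (hF : ∀ i j, HasDerivAt (fun s => F s i j) (F' i j) t) :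
    HasDerivAt (fun s => (F s).det) ((F t).adjugate * F').trace t := by
  have hprod (σ : Equiv.Perm n) : HasDerivAt (fun s => ∏ i, F s (σ i) i)
      (∑ i, (∏ j ∈ Finset.univ.erase i, F t (σ j) j) * F' (σ i) i) t :=
    HasDerivAt.fun_finsetProd fun i _ => hF (σ i) i
  have hcol (σ : Equiv.Perm n) (i : n) :
      ∏ j, (F t).updateCol i (fun k => F' k i) (σ j) j =
        (∏ j ∈ Finset.univ.erase i, F t (σ j) j) * F' (σ i) i := by
    rw [← Finset.prod_erase_mul _ _ (Finset.mem_univ i)]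
    congr 1
    · exact Finset.prod_congr rfl fun j hj => by simp [Finset.ne_of_mem_erase hj]
    · simp
  simp only [det_apply']
  refine (HasDerivAt.fun_sum fun σ _ =>
    (hprod σ).const_mul (Equiv.Perm.sign σ : 𝕜)).congr_deriv ?_
  simp only [trace_adjugate_mul_eq_sum_det_updateCol, det_apply', hcol, Finset.mul_sum]
  exact Finset.sum_comm

theorem Matrix.hasDerivAt_mulVec_apply {F : 𝕜 → Matrix n n 𝕜} {F' : Matrix n n 𝕜} {t : 𝕜}
    (hF : ∀ i j, HasDerivAt (fun s => F s i j) (F' i j) t) (a : n → 𝕜) (i : n) :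
    HasDerivAt (fun s => (F s *ᵥ a) i) ((F' *ᵥ a) i) t :=
  HasDerivAt.fun_sum fun j _ => (hF i j).mul_const (a j)

theorem Matrix.hasDerivAt_dotProduct {v w : 𝕜 → n → 𝕜} {v' w' : n → 𝕜} {t : 𝕜}
    (hv : ∀ i, HasDerivAt (fun s => v s i) (v' i) t)
    (hw : ∀ i, HasDerivAt (fun s => w s i) (w' i) t) :
    HasDerivAt (fun s => v s ⬝ᵥ w s) (v' ⬝ᵥ w t + v t ⬝ᵥ w') t :=
  (HasDerivAt.fun_sum fun i _ => (hv i).mul (hw i)).congr_deriv <| by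
    simp only [dotProduct, Finset.sum_add_distrib]

theorem Matrix.hasDerivAt_det_of_isUnit [DecidableEq n] {F : 𝕜 → Matrix n n 𝕜}
    {F' : Matrix n n 𝕜} {t : 𝕜} (hF : ∀ i j, HasDerivAt (fun s => F s i j) (F' i j) t)
    (h : IsUnit (F t).det) :
    HasDerivAt (fun s => (F s).det) ((F t).det * (F' * (F t)⁻¹).trace) t :=
  (hasDerivAt_det hF).congr_deriv <| by
    rw [inv_def, Ring.inverse_eq_inv', Matrix.mul_smul, trace_smul, smul_eq_mul, ← mul_assoc,
      mul_inv_cancel₀ h.ne_zero, one_mul, trace_mul_comm]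

theorem Matrix.hasDerivAt_sqrt_dotProduct_self {v : ℝ → n → ℝ} {v' : n → ℝ} {t : ℝ}
    (hv : ∀ i, HasDerivAt (fun s => v s i) (v' i) t) (h0 : v t ≠ 0) :
    HasDerivAt (fun s => √(v s ⬝ᵥ v s)) (v t ⬝ᵥ v' / √(v t ⬝ᵥ v t)) t :=
  ((hasDerivAt_dotProduct hv hv).sqrt (dotProduct_self_eq_zero.not.mpr h0)).congr_deriv <| by
    rw [dotProduct_comm v']
    ring

theorem Matrix.hasDerivAt_det_rpow [DecidableEq n] {F : ℝ → Matrix n n ℝ} {F' : Matrix n n ℝ}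
    {t : ℝ} (hF : ∀ i j, HasDerivAt (fun s => F s i j) (F' i j) t) (hpos : 0 < (F t).det) (p : ℝ) :
    HasDerivAt (fun s => (F s).det ^ p) (p * (F t).det ^ p * (F' * (F t)⁻¹).trace) t :=
  ((hasDerivAt_det_of_isUnit hF (isUnit_iff_ne_zero.mpr hpos.ne')).rpow_const
    (Or.inl hpos.ne')).congr_deriv <| by
    rw [Real.rpow_sub_one hpos.ne']
    field_simp

theorem Matrix.hasDerivAt_sqrt_dotProduct_self_mulVec [DecidableEq n] {F : ℝ → Matrix n n ℝ}
    {F' : Matrix n n ℝ} {t : ℝ} (hF : ∀ i j, HasDerivAt (fun s => F s i j) (F' i j) t)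
    (h : IsUnit (F t).det) {a : n → ℝ} (ha : F t *ᵥ a ≠ 0) :
    HasDerivAt (fun s => √((F s *ᵥ a) ⬝ᵥ (F s *ᵥ a)))
      ((F t *ᵥ a) ⬝ᵥ (F' * (F t)⁻¹) *ᵥ (F t *ᵥ a) / √((F t *ᵥ a) ⬝ᵥ (F t *ᵥ a))) t := by
  have hl : F' *ᵥ a = (F' * (F t)⁻¹) *ᵥ (F t *ᵥ a) := by
    rw [mulVec_mulVec, Matrix.mul_assoc, nonsing_inv_mul _ h, Matrix.mul_one]
  rw [← hl]
  exact hasDerivAt_sqrt_dotProduct_self (hasDerivAt_mulVec_apply hF a) ha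

theorem Matrix.dotProduct_add_transpose_mulVec {R : Type*} [CommSemiring R] (A : Matrix n n R)
    (w : n → R) : w ⬝ᵥ (A + Aᵀ) *ᵥ w = 2 * (w ⬝ᵥ A *ᵥ w) := by
  rw [add_mulVec, dotProduct_add, dotProduct_mulVec w Aᵀ, vecMul_transpose, dotProduct_comm,
    two_mul]

theorem Matrix.dotProduct_sub_smul_one_mulVec [DecidableEq n] {R : Type*} [CommRing R]
    (A : Matrix n n R) (c : R) (w : n → R) :
    w ⬝ᵥ (A - c • 1) *ᵥ w = w ⬝ᵥ A *ᵥ w - c * (w ⬝ᵥ w) := by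
  rw [sub_mulVec, smul_mulVec, one_mulVec, dotProduct_sub, dotProduct_smul, smul_eq_mul]

/-- Modified (isochoric) fibre strain rate: with `F̄ = (det F t)^(-1/3) • F t`,
`l = Ḟ (F t)⁻¹`, `d = (l + lᵀ)/2`, the modified stretch
`λ̄ s = (det F s)^(-1/3) ‖F s a₀‖` is differentiable at `t` with derivative
`ε̄ = (F̄ a₀)ᵀ (d − (1/3)(tr d) I) (F̄ a₀) / λ̄ t`. -/
theorem modified_fibre_strain_rate
    (F : ℝ → Matrix (Fin 3) (Fin 3) ℝ) (Fdot : Matrix (Fin 3) (Fin 3) ℝ) (t : ℝ)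
    (a₀ : Fin 3 → ℝ)
    (hF : ∀ i j, HasDerivAt (fun s => F s i j) (Fdot i j) t)
    (hinv : IsUnit (F t).det) (hdet : 0 < (F t).det)
    (ha : F t *ᵥ a₀ ≠ 0) :
    HasDerivAt
      (fun s => (F s).det ^ (-(1 : ℝ) / 3) * Real.sqrt ((F s *ᵥ a₀) ⬝ᵥ (F s *ᵥ a₀)))
      ((((((F t).det ^ (-(1 : ℝ) / 3)) • F t) *ᵥ a₀) ⬝ᵥ
          (((((1 : ℝ) / 2) • (Fdot * (F t)⁻¹ + (Fdot * (F t)⁻¹)ᵀ)) -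
              (((1 : ℝ) / 3) *
                  (((1 : ℝ) / 2) • (Fdot * (F t)⁻¹ + (Fdot * (F t)⁻¹)ᵀ)).trace) •
                (1 : Matrix (Fin 3) (Fin 3) ℝ)) *ᵥ
            (((((F t).det ^ (-(1 : ℝ) / 3)) • F t) *ᵥ a₀)))) /
        ((F t).det ^ (-(1 : ℝ) / 3) * Real.sqrt ((F t *ᵥ a₀) ⬝ᵥ (F t *ᵥ a₀)))) t := by
  refine ((hasDerivAt_det_rpow hF hdet _).mul
    (hasDerivAt_sqrt_dotProduct_self_mulVec hF hinv ha)).congr_deriv ?_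
  set c := (F t).det ^ (-(1 : ℝ) / 3)
  set w := F t *ᵥ a₀
  have hc : c ≠ 0 := (Real.rpow_pos_of_pos hdet _).ne'
  have hnn : 0 ≤ w ⬝ᵥ w := Fintype.sum_nonneg fun i => mul_self_nonneg (w i)
  have hw : √(w ⬝ᵥ w) ≠ 0 := (Real.sqrt_ne_zero hnn).mpr (dotProduct_self_eq_zero.not.mpr ha)
  simp only [smul_mulVec, mulVec_smul, dotProduct_sub_smul_one_mulVec,
    trace_smul, trace_add, trace_transpose, dotProduct_add_transpose_mulVec, smul_dotProduct,
    dotProduct_smul, smul_eq_mul]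
  field_simp
  rw [Real.sq_sqrt hnn]
  ring
end

section
/- Piola identity: let φ : ℝ³ → ℝ³ be twice continuously differentiable, and for each X let F(X) be the 3×3 Jacobian matrix of φ at X (with entries F(X)_{ij} = ∂φ_i/∂X_j). Let cof F(X) = (adjugate F(X))ᵀ denote the cofactor matrix, so that cof F = (det F)·F^{-T} whenever F is invertible. Then each row of the cofactor matrix is divergence-free: for every X and every index i, Σ_{j} ∂/∂X_j [ (cof F(X))_{ij} ] = 0. -/
/-!
Row `i` of `cof F` is `∇φ_{i+1} × ∇φ_{i+2}` (indices mod 3). Since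
`div (a × b) = b · curl a - a · curl b` and the curl of a gradient vanishes by the symmetry of
second derivatives, every row is divergence-free.
-/

open Matrix

theorem cross_apply_cyclic {R : Type*} [CommRing R] (a b : Fin 3 → R) (j : Fin 3) :
    (a ⨯₃ b) j = a (j + 1) * b (j + 2) - a (j + 2) * b (j + 1) := by
  fin_cases j <;> simp [cross_apply]

theorem adjugate_transpose_apply_eq_cross {R : Type*} [CommRing R]
    (A : Matrix (Fin 3) (Fin 3) R) (i : Fin 3) : (A.adjugate)ᵀ i = A (i + 1) ⨯₃ A (i + 2) := by
  ext j
  fin_cases i <;> fin_cases j <;> simp [adjugate_fin_three, cross_apply] <;> ring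

/-- The contraction of a symmetric matrix with the Levi-Civita symbol vanishes; for a Hessian this
is `curl ∇ = 0`. -/
theorem sum_cyclic_eq_zero_of_isSymm {R : Type*} [CommRing R] {H : Matrix (Fin 3) (Fin 3) R}
    (hH : H.IsSymm) (c : Fin 3 → R) :
    ∑ j, (H j (j + 1) * c (j + 2) - H j (j + 2) * c (j + 1)) = 0 := by
  have h01 : H 1 0 = H 0 1 := hH.apply 0 1
  have h02 : H 2 0 = H 0 2 := hH.apply 0 2
  have h12 : H 2 1 = H 1 2 := hH.apply 1 2
  simp only [Fin.sum_univ_three, Fin.isValue, Fin.reduceAdd, zero_add, h01, h02, h12]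
  ring

theorem fderiv_fderiv_apply_comm {E F : Type*} [NormedAddCommGroup E] [NormedSpace ℝ E]
    [NormedAddCommGroup F] [NormedSpace ℝ F] {f : E → F} {x : E} (hf : ContDiffAt ℝ 2 f x)
    (u v : E) :
    fderiv ℝ (fun y => fderiv ℝ f y u) x v = fderiv ℝ (fun y => fderiv ℝ f y v) x u := by
  have hdf : DifferentiableAt ℝ (fderiv ℝ f) x :=
    (hf.fderiv_right (m := 1) le_rfl).differentiableAt one_ne_zero
  rw [fderiv_clm_apply hdf (differentiableAt_const u),
    fderiv_clm_apply hdf (differentiableAt_const v)]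
  simpa using (hf.isSymmSndFDerivAt (by simp)) v u

noncomputable section

namespace Piola

variable {n : ℕ}

def coordGradient (f : (Fin n → ℝ) → ℝ) (y : Fin n → ℝ) : Fin n → ℝ :=
  fun k => fderiv ℝ f y (Pi.single k 1)

def divergence (v : (Fin n → ℝ) → Fin n → ℝ) (x : Fin n → ℝ) : ℝ :=
  ∑ j, fderiv ℝ (fun y => v y j) x (Pi.single j 1)

def hessian (f : (Fin n → ℝ) → ℝ) (x : Fin n → ℝ) : Matrix (Fin n) (Fin n) ℝ :=
  of fun j k => fderiv ℝ (fun y => coordGradient f y k) x (Pi.single j 1)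

theorem hessian_isSymm {f : (Fin n → ℝ) → ℝ} {x : Fin n → ℝ} (hf : ContDiffAt ℝ 2 f x) :
    (hessian f x).IsSymm :=
  IsSymm.ext fun _ _ => fderiv_fderiv_apply_comm hf _ _

theorem differentiableAt_coordGradient_apply {f : (Fin n → ℝ) → ℝ} {x : Fin n → ℝ}
    (hf : ContDiffAt ℝ 2 f x) (k : Fin n) :
    DifferentiableAt ℝ (fun y => coordGradient f y k) x :=
  ((hf.fderiv_right (m := 1) le_rfl).differentiableAt one_ne_zero).clm_apply
    (differentiableAt_const _)

theorem coordGradient_apply_eq_fderiv {m : ℕ} {φ : (Fin n → ℝ) → Fin m → ℝ} {y : Fin n → ℝ}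
    (hφ : DifferentiableAt ℝ φ y) (k : Fin m) :
    coordGradient (fun y => φ y k) y = fun j => fderiv ℝ φ y (Pi.single j 1) k := by
  ext j
  rw [coordGradient, fderiv_apply hφ]
  rfl

theorem fderiv_coordGradient_mul {f g : (Fin n → ℝ) → ℝ} {x : Fin n → ℝ}
    (hf : ContDiffAt ℝ 2 f x) (hg : ContDiffAt ℝ 2 g x) (j k l : Fin n) :
    fderiv ℝ (fun y => coordGradient f y k * coordGradient g y l) x (Pi.single j 1) =
      hessian f x j k * coordGradient g x l + coordGradient f x k * hessian g x j l := by
  rw [fderiv_fun_mul (differentiableAt_coordGradient_apply hf k)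
    (differentiableAt_coordGradient_apply hg l)]
  simp only [_root_.add_apply, _root_.smul_apply, smul_eq_mul, hessian, of_apply]
  ring

theorem divergence_cross_coordGradient {f g : (Fin 3 → ℝ) → ℝ} {x : Fin 3 → ℝ}
    (hf : ContDiffAt ℝ 2 f x) (hg : ContDiffAt ℝ 2 g x) :
    divergence (fun y => coordGradient f y ⨯₃ coordGradient g y) x = 0 := by
  have hsummand : ∀ j : Fin 3,
      fderiv ℝ (fun y => (coordGradient f y ⨯₃ coordGradient g y) j) x (Pi.single j 1) =
        (hessian f x j (j + 1) * coordGradient g x (j + 2)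
          - hessian f x j (j + 2) * coordGradient g x (j + 1))
        - (hessian g x j (j + 1) * coordGradient f x (j + 2)
          - hessian g x j (j + 2) * coordGradient f x (j + 1)) := by
    intro j
    simp only [cross_apply_cyclic]
    have hprod : ∀ k l, DifferentiableAt ℝ
        (fun y => coordGradient f y k * coordGradient g y l) x := fun k l =>
      (differentiableAt_coordGradient_apply hf k).fun_mul
        (differentiableAt_coordGradient_apply hg l)
    rw [fderiv_fun_sub (hprod _ _) (hprod _ _), _root_.sub_apply,
      fderiv_coordGradient_mul hf hg, fderiv_coordGradient_mul hf hg]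
    ring
  simp only [divergence, hsummand, Finset.sum_sub_distrib,
    sum_cyclic_eq_zero_of_isSymm (hessian_isSymm hf),
    sum_cyclic_eq_zero_of_isSymm (hessian_isSymm hg), sub_self]

end Piola

end

open Piola in
/-- Piola identity: for a `C²` map `φ : ℝ³ → ℝ³` with deformation gradient
`F(X)_{ij} = ∂φ_i/∂X_j`, every row of the cofactor matrix `cof F = (adjugate F)ᵀ`
is divergence-free: `∑ j ∂/∂X_j (cof F)_{ij} = 0`. -/
theorem piola_identity
    (φ : (Fin 3 → ℝ) → (Fin 3 → ℝ)) (hφ : ContDiff ℝ 2 φ)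
    (F : (Fin 3 → ℝ) → Matrix (Fin 3) (Fin 3) ℝ)
    (hF : ∀ X, F X = Matrix.of fun i j => fderiv ℝ φ X (Pi.single j 1) i) :
    ∀ (X : Fin 3 → ℝ) (i : Fin 3),
      ∑ j : Fin 3,
        fderiv ℝ (fun Y => ((F Y).adjugate)ᵀ i j) X (Pi.single j 1) = 0 := by
  intro X i
  have hrow : ∀ Y k, F Y k = coordGradient (fun Y => φ Y k) Y := fun Y k => by
    rw [hF, coordGradient_apply_eq_fderiv (hφ.differentiable two_ne_zero Y)]
    rfl
  have hcof : (fun Y => ((F Y).adjugate)ᵀ i) = fun Y =>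
      coordGradient (fun Y => φ Y (i + 1)) Y ⨯₃ coordGradient (fun Y => φ Y (i + 2)) Y := by
    funext Y
    rw [adjugate_transpose_apply_eq_cross, hrow, hrow]
  have hφ_comp : ∀ k, ContDiffAt ℝ 2 (fun Y => φ Y k) X := fun k =>
    (contDiff_pi.1 hφ k).contDiffAt
  have hdiv := divergence_cross_coordGradient (hφ_comp (i + 1)) (hφ_comp (i + 2))
  rwa [← hcof] at hdiv
end
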